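/- For every nonnegative f : ℝ³ → ℝ, not almost-everywhere zero, with ν(1+|v|²)f integrable, there exists a unique multiplier λ = (λ₀,λ₁,λ₂) ∈ Λ = {λ₂ < 0} such that the Maxwellian M(v) = exp(m λ₀ + m λ₁·v + m λ₂|v|²) matches all weighted moments of f: ∫ ν(v)(m, m v, m|v|²) M(v) dv = ∫ ν(v)(m, m v, m|v|²) f(v) dv. Consequently, this M is the unique minimizer of g ↦ ∫ ν h(g) dv over the constraint set χ = { g ≥ 0 : ν(1+|v|²)g ∈ L¹, ∫ ν(m, mv, m|v|²)(g − f) dv = 0 }. -/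

import Mathlib

open MeasureTheory Real Filter
open scoped Topology

noncomputable section

abbrev V3 : Type := Fin 3 → ℝ

def dot3 (a b : V3) : ℝ := ∑ i, a i * b i

def nsq (v : V3) : ℝ := ∑ i, (v i) ^ 2

abbrev L5 : Type := ℝ × V3 × ℝ

def dot5 (a b : L5) : ℝ := a.1 * b.1 + dot3 a.2.1 b.2.1 + a.2.2 * b.2.2

def aVec (m : ℝ) (v : V3) : L5 := (m, m • v, m * nsq v)

def expA (m : ℝ) (l : L5) (v : V3) : ℝ := Real.exp (dot5 l (aVec m v))

def momVec (m : ℝ) (ν g : V3 → ℝ) : L5 :=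
  (∫ v, ν v * (m * g v), fun i => ∫ v, ν v * (m * v i) * g v,
    ∫ v, ν v * (m * nsq v) * g v)

def zdual (m : ℝ) (ν : V3 → ℝ) (l ρ : L5) : ℝ :=
  (∫ v, ν v * expA m l v) - dot5 l ρ

def entH (z : ℝ) : ℝ := z * Real.log z - z

def dualCLM (ρ : L5) : L5 →L[ℝ] ℝ :=
  LinearMap.toContinuousLinearMap
    { toFun := fun δ => dot5 δ ρ
      map_add' := by
        intro a b
        simp [dot5, dot3, Prod.fst_add, Prod.snd_add, Pi.add_apply, add_mul,
          Finset.sum_add_distrib]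
        ring
      map_smul' := by
        intro c a
        simp only [dot5, dot3, Prod.smul_fst, Prod.smul_snd, Pi.smul_apply,
          smul_eq_mul, Finset.mul_sum, RingHom.id_apply]
        ring_nf
        rw [Finset.mul_sum]
        ring_nf }

/-- Membership in the constraint set χ. -/
def memChi (m : ℝ) (ν f g : V3 → ℝ) : Prop :=
  (∀ v, 0 ≤ g v) ∧
  Integrable (fun v => ν v * (1 + nsq v) * g v) ∧
  (∫ v, ν v * (m * (g v - f v))) = 0 ∧
  (∀ i : Fin 3, (∫ v, ν v * (m * v i * (g v - f v))) = 0) ∧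
  (∫ v, ν v * (m * nsq v * (g v - f v))) = 0

/-- The ν-weighted moments of the Maxwellian `exp_λ` match those of `f`. -/
def momentMatch (m : ℝ) (ν f : V3 → ℝ) (l : L5) : Prop :=
  (∫ v, ν v * (m * expA m l v)) = (∫ v, ν v * (m * f v)) ∧
  (∀ i : Fin 3, (∫ v, ν v * (m * v i * expA m l v)) = (∫ v, ν v * (m * v i * f v))) ∧
  (∫ v, ν v * (m * nsq v * expA m l v)) = (∫ v, ν v * (m * nsq v * f v))

/-!
The multiplier is found by minimising the convex dual function
`zdual λ ρ = ∫ ν exp (λ·a) - λ·ρ` over the open half-space `Λ = {λ₂ < 0}`, where `ρ` collects the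
weighted moments of `f`. Its sublevel sets are closed (Fatou's lemma, together with the
non-integrability of `ν exp (λ·a)` outside `Λ`) and contain no ray `λ₀ + t δ`: either `δ·a` is
positive on an open set and the exponential term outgrows the linear one, or `δ·a ≤ 0`
everywhere and then `δ·ρ < 0`, because `f` is not a.e. zero while the zero set of the nonzero
quadratic polynomial `δ·a` is null. Hence a minimiser exists, and its first-order condition is
the moment equation.

Uniqueness follows from the monotonicity of `exp`: for two multipliers, `ν (λ - λ')·a (M - M')`
is nonnegative with integral zero, so `(λ - λ')·a = 0` a.e. Minimality of `M` is Gibbs'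
inequality `h(g) - h(M) - log M (g - M) = M klFun (g / M) ≥ 0`, whose linear term integrates to
zero because `g` and `M` have the same moments as `f`.
-/

open InformationTheory

theorem integrable_and_integral_le_of_tendsto {α : Type*} [MeasurableSpace α] {μ : Measure α}
    {F : ℕ → α → ℝ} {f : α → ℝ} {c : ℕ → ℝ} {C : ℝ}
    (hF : ∀ n, Integrable (F n) μ) (hF0 : ∀ n, 0 ≤ᵐ[μ] F n)
    (hFf : ∀ᵐ x ∂μ, Tendsto (fun n => F n x) atTop (𝓝 (f x)))
    (hc : Tendsto c atTop (𝓝 C)) (hFc : ∀ n, ∫ x, F n x ∂μ ≤ c n) :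
    Integrable f μ ∧ ∫ x, f x ∂μ ≤ C := by
  have hC : 0 ≤ C := ge_of_tendsto' hc fun n => (integral_nonneg_of_ae (hF0 n)).trans (hFc n)
  have hf0 : 0 ≤ᵐ[μ] f := by
    filter_upwards [hFf, ae_all_iff.2 hF0] with x hx h0 using ge_of_tendsto' hx h0
  have key : ∫⁻ x, ENNReal.ofReal (f x) ∂μ ≤ ENNReal.ofReal C :=
    calc ∫⁻ x, ENNReal.ofReal (f x) ∂μ
        = ∫⁻ x, liminf (fun n => ENNReal.ofReal (F n x)) atTop ∂μ := by
          refine lintegral_congr_ae ?_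
          filter_upwards [hFf] with x hx
          exact (((ENNReal.continuous_ofReal.tendsto _).comp hx).liminf_eq).symm
      _ ≤ liminf (fun n => ∫⁻ x, ENNReal.ofReal (F n x) ∂μ) atTop :=
          lintegral_liminf_le' fun n => (hF n).1.aemeasurable.ennreal_ofReal
      _ ≤ liminf (fun n => ENNReal.ofReal (c n)) atTop := by
          refine liminf_le_liminf (Eventually.of_forall fun n => ?_)
          rw [← ofReal_integral_eq_lintegral_ofReal (hF n) (hF0 n)]
          exact ENNReal.ofReal_le_ofReal (hFc n)
      _ = ENNReal.ofReal C := ((ENNReal.continuous_ofReal.tendsto C).comp hc).liminf_eq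
  have hfi : Integrable f μ :=
    ⟨aestronglyMeasurable_of_tendsto_ae _ (fun n => (hF n).1) hFf,
      (hasFiniteIntegral_iff_ofReal hf0).2 (key.trans_lt ENNReal.ofReal_lt_top)⟩
  refine ⟨hfi, ?_⟩
  rw [← ENNReal.ofReal_le_ofReal_iff hC, ofReal_integral_eq_lintegral_ofReal hfi hf0]
  exact key

theorem Convex.isBounded_of_forall_exists_add_smul_notMem {E : Type*} [NormedAddCommGroup E]
    [NormedSpace ℝ E] [FiniteDimensional ℝ E] {S : Set E} (hSc : IsClosed S)
    (hS : Convex ℝ S) {x₀ : E} (hx₀ : x₀ ∈ S)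
    (hray : ∀ δ : E, δ ≠ 0 → ∃ t : ℝ, 0 ≤ t ∧ x₀ + t • δ ∉ S) : Bornology.IsBounded S := by
  by_contra hnb
  have hfar : ∀ n : ℕ, ∃ x ∈ S, (n : ℝ) + 1 ≤ ‖x - x₀‖ := fun n => by
    by_contra! h
    exact hnb ((Metric.isBounded_closedBall (x := x₀) (r := n + 1)).subset fun y hy =>
      Metric.mem_closedBall.2 (dist_eq_norm y x₀ ▸ (h y hy).le))
  choose x hxS hxfar using hfar
  have hpos : ∀ n, 0 < ‖x n - x₀‖ := fun n => lt_of_lt_of_le (by positivity) (hxfar n)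
  set u : ℕ → E := fun n => ‖x n - x₀‖⁻¹ • (x n - x₀)
  have hu : ∀ n, u n ∈ Metric.sphere (0 : E) 1 := fun n => by
    rw [mem_sphere_zero_iff_norm, norm_smul, norm_inv, norm_norm, inv_mul_cancel₀ (hpos n).ne']
  obtain ⟨δ, hδ, ψ, hψ, hlim⟩ := (isCompact_sphere (0 : E) 1).tendsto_subseq hu
  obtain ⟨t, ht, hnot⟩ := hray δ (ne_zero_of_mem_unit_sphere ⟨δ, hδ⟩)
  refine hnot (hSc.mem_of_tendsto (tendsto_const_nhds.add (hlim.const_smul t))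
    (eventually_atTop.2 ⟨⌈t⌉₊, fun k hk => ?_⟩))
  -- `x₀ + t • u n` lies on the segment from `x₀` to `x n` as soon as `t ≤ ‖x n - x₀‖`
  have htk : t ≤ ‖x (ψ k) - x₀‖ :=
    calc t ≤ ⌈t⌉₊ := Nat.le_ceil t
      _ ≤ k := by exact_mod_cast hk
      _ ≤ ψ k := by exact_mod_cast hψ.le_apply
      _ ≤ _ := by linarith [hxfar (ψ k)]
  have hmem := hS.add_smul_sub_mem hx₀ (hxS (ψ k))
    ⟨div_nonneg ht (hpos (ψ k)).le, (div_le_one (hpos (ψ k))).2 htk⟩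
  simpa only [Function.comp, u, smul_smul, div_eq_mul_inv] using hmem

theorem Real.mul_add_one_sub_log_le_exp {K : ℝ} (hK : 0 < K) (y : ℝ) :
    K * (y + 1 - Real.log K) ≤ Real.exp y := by
  have := Real.add_one_le_exp (y - Real.log K)
  rw [Real.exp_sub, Real.exp_log hK, le_div_iff₀ hK] at this
  linarith

lemma entH_sub_entH_sub_log_mul {w : ℝ} (hw : 0 < w) (z : ℝ) :
    entH z - entH w - Real.log w * (z - w) = w * klFun (z / w) := by
  rcases eq_or_ne z 0 with rfl | hz
  · simp only [entH, klFun_apply, zero_div, zero_mul, Real.log_zero]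
    ring
  · rw [klFun_apply, Real.log_div hz hw.ne', entH, entH]
    field_simp
    ring

lemma sub_mul_exp_sub_exp_nonneg (x y : ℝ) : 0 ≤ (x - y) * (Real.exp x - Real.exp y) := by
  rcases le_total x y with h | h
  · exact mul_nonneg_of_nonpos_of_nonpos (sub_nonpos.2 h) (sub_nonpos.2 (Real.exp_le_exp.2 h))
  · exact mul_nonneg (sub_nonneg.2 h) (sub_nonneg.2 (Real.exp_le_exp.2 h))

lemma nsq_nonneg (v : V3) : 0 ≤ nsq v := Finset.sum_nonneg fun _ _ => sq_nonneg _

lemma abs_apply_le_one_add_nsq (v : V3) (i : Fin 3) : |v i| ≤ 1 + nsq v := by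
  have : (v i) ^ 2 ≤ nsq v :=
    Finset.single_le_sum (fun j _ => sq_nonneg (v j)) (Finset.mem_univ i)
  nlinarith [abs_nonneg (v i), sq_abs (v i)]

lemma continuous_nsq : Continuous nsq :=
  continuous_finsetSum _ fun i _ => (continuous_apply i).pow 2

lemma continuous_aVec (m : ℝ) : Continuous (aVec m) :=
  continuous_const.prodMk ((continuous_id.const_smul m).prodMk
    (continuous_const.mul continuous_nsq))

lemma dualCLM_apply (ρ δ : L5) : dualCLM ρ δ = dot5 δ ρ := rfl

lemma dot5_comm (a b : L5) : dot5 a b = dot5 b a := by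
  simp only [dot5, dot3, mul_comm]

lemma continuous_dot5_aVec (m : ℝ) (δ : L5) : Continuous fun v => dot5 δ (aVec m v) := by
  simp only [dot5_comm δ]
  exact (dualCLM δ).continuous.comp (continuous_aVec m)

lemma dot5_add_left (a b c : L5) : dot5 (a + b) c = dot5 a c + dot5 b c :=
  map_add (dualCLM c) a b

lemma dot5_smul_left (t : ℝ) (a c : L5) : dot5 (t • a) c = t * dot5 a c :=
  map_smul (dualCLM c) t a

lemma dot5_sub_left (a b c : L5) : dot5 (a - b) c = dot5 a c - dot5 b c :=
  map_sub (dualCLM c) a b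

lemma dot5_add_right (a b c : L5) : dot5 c (a + b) = dot5 c a + dot5 c b := by
  rw [dot5_comm, dot5_add_left, dot5_comm a, dot5_comm b]

lemma dot5_smul_right (t : ℝ) (a c : L5) : dot5 c (t • a) = t * dot5 c a := by
  rw [dot5_comm, dot5_smul_left, dot5_comm a]

lemma dot5_zero_right (a : L5) : dot5 a 0 = 0 := by
  simp [dot5, dot3]

lemma dot5_aVec (m : ℝ) (l : L5) (v : V3) :
    dot5 l (aVec m v) = m * (l.1 + dot3 l.2.1 v + l.2.2 * nsq v) := by
  simp only [dot5, aVec, dot3, Fin.sum_univ_three, Pi.smul_apply, smul_eq_mul]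
  ring

lemma abs_dot5_le (a b : L5) : |dot5 a b| ≤ 5 * ‖a‖ * ‖b‖ := by
  have h1 : ∀ x : L5, |x.1| ≤ ‖x‖ := norm_fst_le
  have h2 : ∀ (x : L5) (i : Fin 3), |x.2.1 i| ≤ ‖x‖ := fun x i =>
    (norm_le_pi_norm x.2.1 i).trans ((norm_fst_le x.2).trans (norm_snd_le x))
  have h3 : ∀ x : L5, |x.2.2| ≤ ‖x‖ := fun x => (norm_snd_le x.2).trans (norm_snd_le x)
  have hprod : ∀ x y X Y : ℝ, |x| ≤ X → |y| ≤ Y → -(X * Y) ≤ x * y ∧ x * y ≤ X * Y :=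
    fun x y X Y hx hy => abs_le.1 <| by
      rw [abs_mul]; exact mul_le_mul hx hy (abs_nonneg _) ((abs_nonneg _).trans hx)
  simp only [dot5, dot3, Fin.sum_univ_three]
  have := hprod _ _ _ _ (h1 a) (h1 b)
  have := hprod _ _ _ _ (h2 a 0) (h2 b 0)
  have := hprod _ _ _ _ (h2 a 1) (h2 b 1)
  have := hprod _ _ _ _ (h2 a 2) (h2 b 2)
  have := hprod _ _ _ _ (h3 a) (h3 b)
  rw [abs_le]
  constructor <;> linarith

lemma norm_aVec_le (m : ℝ) (v : V3) : ‖aVec m v‖ ≤ |m| * (1 + nsq v) := by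
  have hm := abs_nonneg m
  have hn := nsq_nonneg v
  refine norm_prod_le_iff.2 ⟨?_, norm_prod_le_iff.2 ⟨?_, ?_⟩⟩ <;> simp only [aVec]
  · rw [Real.norm_eq_abs]; nlinarith
  · refine (pi_norm_le_iff_of_nonneg (by positivity)).2 fun i => ?_
    rw [Pi.smul_apply, norm_smul, Real.norm_eq_abs, Real.norm_eq_abs]
    exact mul_le_mul_of_nonneg_left (abs_apply_le_one_add_nsq v i) hm
  · rw [Real.norm_eq_abs, abs_mul, abs_of_nonneg hn]; nlinarith

lemma abs_dot5_aVec_le (m : ℝ) (l : L5) (v : V3) :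
    |dot5 l (aVec m v)| ≤ 5 * ‖l‖ * |m| * (1 + nsq v) := by
  calc _ ≤ 5 * ‖l‖ * ‖aVec m v‖ := abs_dot5_le _ _
    _ ≤ 5 * ‖l‖ * (|m| * (1 + nsq v)) := by gcongr; exact norm_aVec_le m v
    _ = _ := by ring

lemma norm_dualCLM_le (ρ : L5) : ‖dualCLM ρ‖ ≤ 5 * ‖ρ‖ :=
  ContinuousLinearMap.opNorm_le_bound _ (by positivity) fun δ => by
    rw [dualCLM_apply, Real.norm_eq_abs]
    linarith [abs_dot5_le δ ρ]

lemma continuous_dualCLM : Continuous dualCLM :=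
  let D : L5 →ₗ[ℝ] L5 →L[ℝ] ℝ :=
    { toFun := dualCLM
      map_add' := fun a b => ContinuousLinearMap.ext fun δ => dot5_add_right a b δ
      map_smul' := fun t a => ContinuousLinearMap.ext fun δ => dot5_smul_right t a δ }
  D.continuous_of_finiteDimensional

lemma eq_of_forall_dot5_eq {x y : L5} (h : ∀ δ : L5, dot5 δ x = dot5 δ y) : x = y := by
  have h1 := h (1, 0, 0)
  have h2 : ∀ i, dot5 (0, Pi.single i 1, 0) x = dot5 (0, Pi.single i 1, 0) y := fun i => h _
  have h3 := h (0, 0, 1)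
  simp only [dot5, dot3, Pi.single_apply] at h1 h2 h3
  exact Prod.ext (by simpa using h1)
    (Prod.ext (funext fun i => by simpa using h2 i) (by simpa using h3))

lemma expA_pos (m : ℝ) (l : L5) (v : V3) : 0 < expA m l v := Real.exp_pos _

lemma log_expA (m : ℝ) (l : L5) (v : V3) : Real.log (expA m l v) = dot5 l (aVec m v) :=
  Real.log_exp _

lemma expA_add (m : ℝ) (l l' : L5) (v : V3) :
    expA m (l + l') v = expA m l v * Real.exp (dot5 l' (aVec m v)) := by
  rw [expA, expA, dot5_add_left, Real.exp_add]

lemma volume_setOf_nsq_eq (r : ℝ) : volume {u : V3 | nsq u = r} = 0 := by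
  have e := EuclideanSpace.volume_preserving_symm_measurableEquiv_toLp (Fin 3)
  have hmeas : MeasurableSet {u : V3 | nsq u = r} :=
    continuous_nsq.measurable (measurableSet_singleton r)
  rw [← e.measure_preimage hmeas.nullMeasurableSet]
  have hset : (MeasurableEquiv.toLp 2 (Fin 3 → ℝ)).symm ⁻¹' {u : V3 | nsq u = r}
      = {x : EuclideanSpace ℝ (Fin 3) | ‖x‖ ^ 2 = r} := by
    ext x
    have hx : nsq ((MeasurableEquiv.toLp 2 (Fin 3 → ℝ)).symm x) = ∑ i, (x i) ^ 2 := rfl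
    rw [Set.mem_preimage, Set.mem_ofPred_eq, Set.mem_ofPred_eq, hx, EuclideanSpace.norm_eq,
      Real.sq_sqrt (by positivity)]
    simp only [Real.norm_eq_abs, sq_abs]
  rw [hset]
  rcases lt_or_ge r 0 with hr | hr
  · convert measure_empty (μ := (volume : Measure (EuclideanSpace ℝ (Fin 3))))
    exact Set.eq_empty_of_forall_notMem fun x (hx : ‖x‖ ^ 2 = r) => by
      nlinarith [sq_nonneg ‖x‖]
  · have : {x : EuclideanSpace ℝ (Fin 3) | ‖x‖ ^ 2 = r} = Metric.sphere 0 (√r) := by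
      ext x
      rw [Set.mem_ofPred_eq, mem_sphere_zero_iff_norm, ← Real.sqrt_inj (sq_nonneg _) hr,
        Real.sqrt_sq (norm_nonneg x)]
    rw [this]
    exact Measure.addHaar_sphere volume 0 _

lemma volume_setOf_dot3_eq {b : V3} (hb : b ≠ 0) (r : ℝ) :
    volume {v : V3 | dot3 b v = r} = 0 := by
  obtain ⟨i, hi⟩ := Function.ne_iff.1 hb
  set L : V3 →ₗ[ℝ] ℝ := dotProductBilin ℝ ℝ b
  set p : V3 := (r / b i) • Pi.single i 1
  have hLp : L p = r := by
    simp [L, p, dotProduct, Pi.single_apply, div_mul_cancel₀ r hi]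
  have hset : {v : V3 | dot3 b v = r} = (· + -p) ⁻¹' (LinearMap.ker L : Set V3) := by
    ext v
    simp only [Set.mem_ofPred_eq, Set.mem_preimage, SetLike.mem_coe, LinearMap.mem_ker,
      map_add, map_neg, hLp]
    change dot3 b v = r ↔ dot3 b v + -r = 0
    constructor <;> intro h <;> linarith
  have hker : LinearMap.ker L ≠ ⊤ := fun htop => by
    have : L (Pi.single i 1) = 0 := LinearMap.mem_ker.1 (htop ▸ Submodule.mem_top)
    simp [L, dotProduct, Pi.single_apply] at this
    exact hi this
  rw [hset, measure_preimage_add_right]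
  exact Measure.addHaar_submodule volume _ hker

lemma volume_setOf_dot5_aVec_eq_zero {m : ℝ} (hm : m ≠ 0) {δ : L5} (hδ : δ ≠ 0) :
    volume {v : V3 | dot5 δ (aVec m v) = 0} = 0 := by
  obtain ⟨c, b, d⟩ := δ
  have hset : {v : V3 | dot5 (c, b, d) (aVec m v) = 0} = {v | c + dot3 b v + d * nsq v = 0} := by
    ext v
    simp only [Set.mem_ofPred_eq, dot5_aVec, mul_eq_zero, hm, false_or]
  rw [hset]
  by_cases hd : d = 0
  · subst hd
    by_cases hb : b = 0
    · subst hb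
      have hc : c ≠ 0 := fun hc => hδ (by simp [hc])
      simp [dot3, hc]
    · simpa [eq_neg_iff_add_eq_zero, add_comm c] using volume_setOf_dot3_eq hb (-c)
  · set w : V3 := fun i => b i / (2 * d)
    set r : ℝ := nsq w - c / d
    have hsq : ∀ v, c + dot3 b v + d * nsq v = d * (nsq (v + w) - r) := fun v => by
      simp only [nsq, dot3, Fin.sum_univ_three, Pi.add_apply, r, w]
      field_simp
      ring
    have hset' : {v : V3 | c + dot3 b v + d * nsq v = 0} = (· + w) ⁻¹' {u | nsq u = r} := by
      ext v
      simp only [Set.mem_ofPred_eq, Set.mem_preimage, hsq, mul_eq_zero, hd, false_or, sub_eq_zero]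
    rw [hset', measure_preimage_add_right]
    exact volume_setOf_nsq_eq r

lemma ae_dot5_aVec_ne_zero {m : ℝ} (hm : m ≠ 0) {δ : L5} (hδ : δ ≠ 0) :
    ∀ᵐ v, dot5 δ (aVec m v) ≠ 0 := by
  simpa [ae_iff] using volume_setOf_dot5_aVec_eq_zero hm hδ

lemma eq_zero_of_ae_dot5_aVec_eq_zero {m : ℝ} (hm : m ≠ 0) {δ : L5}
    (h : ∀ᵐ v, dot5 δ (aVec m v) = 0) : δ = 0 := by
  by_contra hδ
  obtain ⟨v, hv, hv'⟩ := (h.and (ae_dot5_aVec_ne_zero hm hδ)).exists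
  exact hv' hv

section Moments

variable {m : ℝ} {ν h : V3 → ℝ}

lemma integrable_mul_of_abs_le (hh : Integrable (fun v => ν v * (1 + nsq v) * h v))
    {G : V3 → ℝ} (hG : Continuous G) {C : ℝ} (hGC : ∀ v, |G v| ≤ C * (1 + nsq v)) :
    Integrable (fun v => ν v * G v * h v) := by
  have hpos : ∀ v, 0 < 1 + nsq v := fun v => by linarith [nsq_nonneg v]
  have hbdd : ∀ v, ‖G v / (1 + nsq v)‖ ≤ C := fun v => by
    rw [Real.norm_eq_abs, abs_div, abs_of_pos (hpos v), div_le_iff₀ (hpos v)]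
    exact hGC v
  refine (hh.bdd_mul (hG.div (continuous_const.add continuous_nsq)
    fun v => (hpos v).ne').aestronglyMeasurable (ae_of_all _ hbdd)).congr (ae_of_all _ fun v => ?_)
  simp only [Pi.div_apply, Pi.add_apply]
  field_simp [(hpos v).ne']

lemma integrable_dot5_aVec_mul (hh : Integrable (fun v => ν v * (1 + nsq v) * h v)) (δ : L5) :
    Integrable (fun v => ν v * dot5 δ (aVec m v) * h v) :=
  integrable_mul_of_abs_le hh (continuous_dot5_aVec m δ) (abs_dot5_aVec_le m δ)

lemma dot5_momVec (hh : Integrable (fun v => ν v * (1 + nsq v) * h v)) (δ : L5) :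
    dot5 δ (momVec m ν h) = ∫ v, ν v * dot5 δ (aVec m v) * h v := by
  have hconst : Integrable (fun v => ν v * m * h v) :=
    integrable_mul_of_abs_le hh continuous_const (C := |m|) fun v => by
      nlinarith [abs_nonneg m, nsq_nonneg v]
  have hlin : ∀ i, Integrable (fun v => ν v * (m * v i) * h v) := fun i =>
    integrable_mul_of_abs_le hh (continuous_const.mul (continuous_apply i)) (C := |m|) fun v => by
      rw [abs_mul]; exact mul_le_mul_of_nonneg_left (abs_apply_le_one_add_nsq v i) (abs_nonneg m)
  have hquad : Integrable (fun v => ν v * (m * nsq v) * h v) :=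
    integrable_mul_of_abs_le hh (continuous_const.mul continuous_nsq) (C := |m|) fun v => by
      rw [abs_mul, abs_of_nonneg (nsq_nonneg v)]; nlinarith [abs_nonneg m, nsq_nonneg v]
  have hsplit : (fun v => ν v * dot5 δ (aVec m v) * h v) = fun v =>
      (δ.1 * (ν v * m * h v) + ∑ i, δ.2.1 i * (ν v * (m * v i) * h v))
        + δ.2.2 * (ν v * (m * nsq v) * h v) := by
    funext v
    simp only [dot5_aVec, dot3, Fin.sum_univ_three]
    ring
  have hsum : Integrable (fun v => ∑ i, δ.2.1 i * (ν v * (m * v i) * h v)) :=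
    integrable_finsetSum _ fun i _ => (hlin i).const_mul _
  rw [hsplit, integral_add (f := fun v => δ.1 * (ν v * m * h v) + _)
      ((hconst.const_mul _).add hsum) (hquad.const_mul _),
    integral_add (f := fun v => δ.1 * (ν v * m * h v)) (hconst.const_mul _) hsum,
    integral_finsetSum _ fun i _ => (hlin i).const_mul _]
  simp only [integral_const_mul, dot5, dot3, momVec, mul_assoc]

end Moments

lemma momentMatch_iff {m : ℝ} {ν f : V3 → ℝ} {l : L5} :
    momentMatch m ν f l ↔ momVec m ν (expA m l) = momVec m ν f := by
  simp only [momentMatch, momVec, Prod.ext_iff, funext_iff, mul_assoc]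

lemma momVec_eq_of_memChi {m : ℝ} {ν f g : V3 → ℝ}
    (hf : Integrable (fun v => ν v * (1 + nsq v) * f v)) (hchi : memChi m ν f g) :
    momVec m ν g = momVec m ν f := by
  obtain ⟨-, hg, h0, hlin, hquad⟩ := hchi
  have hgf : Integrable (fun v => ν v * (1 + nsq v) * (g v - f v)) := by
    refine (hg.sub hf).congr (ae_of_all _ fun v => ?_)
    simp only [Pi.sub_apply, mul_sub]
  have hzero : momVec m ν (fun v => g v - f v) = 0 :=
    Prod.ext h0 (Prod.ext (funext fun i => show ∫ v, ν v * (m * v i) * (g v - f v) = 0 by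
      simpa only [mul_assoc] using hlin i)
      (show ∫ v, ν v * (m * nsq v) * (g v - f v) = 0 by simpa only [mul_assoc] using hquad))
  refine eq_of_forall_dot5_eq fun δ => ?_
  have := dot5_momVec (m := m) hgf δ
  simp only [hzero, dot5_zero_right, mul_sub] at this
  rw [dot5_momVec hg, dot5_momVec hf, ← sub_eq_zero, ← integral_sub
    (integrable_dot5_aVec_mul hg δ) (integrable_dot5_aVec_mul hf δ), this]

lemma eq_of_momVec_expA_eq {m : ℝ} (hm : m ≠ 0) {ν : V3 → ℝ} (hν : ∀ v, 0 < ν v)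
    {l l' : L5} (hl : Integrable (fun v => ν v * (1 + nsq v) * expA m l v))
    (hl' : Integrable (fun v => ν v * (1 + nsq v) * expA m l' v))
    (h : momVec m ν (expA m l) = momVec m ν (expA m l')) : l = l' := by
  set x := fun v => dot5 l (aVec m v)
  set y := fun v => dot5 l' (aVec m v)
  have hxy : ∀ v, dot5 (l - l') (aVec m v) = x v - y v := fun v => dot5_sub_left _ _ _
  set D := fun v => ν v * dot5 (l - l') (aVec m v) * expA m l v
    - ν v * dot5 (l - l') (aVec m v) * expA m l' v
  have hD : ∀ v, D v = ν v * ((x v - y v) * (Real.exp (x v) - Real.exp (y v))) := fun v => by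
    simp only [D, hxy, expA, x, y]; ring
  have hD0 : 0 ≤ D := fun v => hD v ▸ mul_nonneg (hν v).le (sub_mul_exp_sub_exp_nonneg _ _)
  have hDint : Integrable D :=
    (integrable_dot5_aVec_mul hl (l - l')).sub (integrable_dot5_aVec_mul hl' (l - l'))
  have hDzero : ∫ v, D v = 0 := by
    rw [integral_sub (integrable_dot5_aVec_mul hl (l - l')) (integrable_dot5_aVec_mul hl' _),
      ← dot5_momVec hl, ← dot5_momVec hl', h, sub_self]
  have hae : ∀ᵐ v, dot5 (l - l') (aVec m v) = 0 := by
    filter_upwards [(integral_eq_zero_iff_of_nonneg hD0 hDint).1 hDzero] with v hv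
    rw [Pi.zero_apply, hD, mul_eq_zero, mul_eq_zero, sub_eq_zero, sub_eq_zero,
      Real.exp_eq_exp, or_self] at hv
    rw [hxy, sub_eq_zero]
    exact hv.resolve_left (hν v).ne'
  exact sub_eq_zero.1 (eq_zero_of_ae_dot5_aVec_eq_zero hm hae)

section Minimizer

variable {m : ℝ} {ν g : V3 → ℝ} {l : L5}

lemma integrable_entH_expA (hM : Integrable (fun v => ν v * (1 + nsq v) * expA m l v)) :
    Integrable (fun v => ν v * entH (expA m l v)) := by
  refine (integrable_mul_of_abs_le hM (G := fun v => dot5 l (aVec m v) - 1)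
    ((continuous_dot5_aVec m l).sub continuous_const) (C := 5 * ‖l‖ * |m| + 1) fun v => ?_).congr
    (ae_of_all _ fun v => ?_)
  · have := abs_dot5_aVec_le m l v
    have := nsq_nonneg v
    calc |dot5 l (aVec m v) - 1| ≤ |dot5 l (aVec m v)| + 1 := by
          simpa using abs_sub (dot5 l (aVec m v)) 1
      _ ≤ _ := by nlinarith
  · simp only [entH, log_expA]
    ring

lemma integral_mul_klFun_eq (hM : Integrable (fun v => ν v * (1 + nsq v) * expA m l v))
    (hg : Integrable (fun v => ν v * (1 + nsq v) * g v))
    (hgent : Integrable (fun v => ν v * entH (g v)))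
    (hmom : momVec m ν g = momVec m ν (expA m l)) :
    Integrable (fun v => ν v * (expA m l v * klFun (g v / expA m l v))) ∧
    ∫ v, ν v * (expA m l v * klFun (g v / expA m l v))
      = (∫ v, ν v * entH (g v)) - ∫ v, ν v * entH (expA m l v) := by
  have hMent := integrable_entH_expA hM
  have hlg := integrable_dot5_aVec_mul (m := m) hg l
  have hlM := integrable_dot5_aVec_mul (m := m) hM l
  have hpt : (fun v => ν v * (expA m l v * klFun (g v / expA m l v))) = fun v =>
      (ν v * entH (g v) - ν v * entH (expA m l v))
        - (ν v * dot5 l (aVec m v) * g v - ν v * dot5 l (aVec m v) * expA m l v) := by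
    funext v
    rw [← entH_sub_entH_sub_log_mul (expA_pos m l v), log_expA]
    ring
  have hlin : ∫ v, ν v * dot5 l (aVec m v) * g v = ∫ v, ν v * dot5 l (aVec m v) * expA m l v := by
    rw [← dot5_momVec hg, ← dot5_momVec hM, hmom]
  rw [hpt]
  refine ⟨(hgent.sub hMent).sub (hlg.sub hlM), ?_⟩
  rw [integral_sub (f := fun v => _ - _) (g := fun v => _ - _) (hgent.sub hMent) (hlg.sub hlM),
    integral_sub hgent hMent, integral_sub hlg hlM, hlin, sub_self, sub_zero]

lemma integral_entH_expA_le (hν : ∀ v, 0 ≤ ν v) (hg0 : ∀ v, 0 ≤ g v)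
    (hM : Integrable (fun v => ν v * (1 + nsq v) * expA m l v))
    (hg : Integrable (fun v => ν v * (1 + nsq v) * g v))
    (hgent : Integrable (fun v => ν v * entH (g v)))
    (hmom : momVec m ν g = momVec m ν (expA m l)) :
    ∫ v, ν v * entH (expA m l v) ≤ ∫ v, ν v * entH (g v) := by
  rw [← sub_nonneg, ← (integral_mul_klFun_eq hM hg hgent hmom).2]
  exact integral_nonneg fun v => mul_nonneg (hν v) (mul_nonneg (expA_pos m l v).le
    (klFun_nonneg (div_nonneg (hg0 v) (expA_pos m l v).le)))

lemma ae_eq_expA_of_integral_entH_eq (hν : ∀ v, 0 < ν v) (hg0 : ∀ v, 0 ≤ g v)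
    (hM : Integrable (fun v => ν v * (1 + nsq v) * expA m l v))
    (hg : Integrable (fun v => ν v * (1 + nsq v) * g v))
    (hgent : Integrable (fun v => ν v * entH (g v)))
    (hmom : momVec m ν g = momVec m ν (expA m l))
    (heq : ∫ v, ν v * entH (g v) = ∫ v, ν v * entH (expA m l v)) :
    g =ᵐ[volume] expA m l := by
  obtain ⟨hint, hval⟩ := integral_mul_klFun_eq hM hg hgent hmom
  have hnonneg : ∀ v, 0 ≤ klFun (g v / expA m l v) := fun v =>
    klFun_nonneg (div_nonneg (hg0 v) (expA_pos m l v).le)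
  rw [heq, sub_self, integral_eq_zero_iff_of_nonneg (fun v => mul_nonneg (hν v).le
    (mul_nonneg (expA_pos m l v).le (hnonneg v))) hint] at hval
  filter_upwards [hval] with v hv
  rw [Pi.zero_apply, mul_eq_zero, mul_eq_zero, klFun_eq_zero_iff (div_nonneg (hg0 v)
    (expA_pos m l v).le), div_eq_one_iff_eq (expA_pos m l v).ne'] at hv
  exact (hv.resolve_left (hν v).ne').resolve_left (expA_pos m l v).ne'

end Minimizer

def Λ : Set L5 := {l | l.2.2 < 0}

lemma convex_Λ : Convex ℝ Λ :=
  convex_halfSpace_lt (f := fun l : L5 => l.2.2) ⟨fun _ _ => rfl, fun _ _ => rfl⟩ 0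

lemma isOpen_Λ : IsOpen Λ :=
  isOpen_lt (continuous_snd.comp continuous_snd) continuous_const

section Dual

variable {m : ℝ} {ν : V3 → ℝ}

lemma convexOn_zdual (hν : ∀ v, 0 ≤ ν v)
    (hint : ∀ l ∈ Λ, Integrable (fun v => ν v * expA m l v)) (ρ : L5) :
    ConvexOn ℝ Λ (fun l => zdual m ν l ρ) := by
  refine ConvexOn.sub ⟨convex_Λ, fun x hx y hy a b ha hb hab => ?_⟩
    ((dualCLM ρ).toLinearMap.concaveOn convex_Λ)
  have hpt : ∀ v, ν v * expA m (a • x + b • y) v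
      ≤ a * (ν v * expA m x v) + b * (ν v * expA m y v) := fun v => by
    have := convexOn_exp.2 (Set.mem_univ (dot5 x (aVec m v))) (Set.mem_univ (dot5 y (aVec m v)))
      ha hb hab
    simp only [smul_eq_mul] at this
    rw [expA, dot5_add_left, dot5_smul_left, dot5_smul_left]
    calc _ ≤ ν v * (a * Real.exp (dot5 x (aVec m v)) + b * Real.exp (dot5 y (aVec m v))) :=
          mul_le_mul_of_nonneg_left this (hν v)
      _ = _ := by simp only [expA]; ring
  have hxi := (hint x hx).const_mul a
  have hyi := (hint y hy).const_mul b
  calc ∫ v, ν v * expA m (a • x + b • y) v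
      ≤ ∫ v, (a * (ν v * expA m x v) + b * (ν v * expA m y v)) :=
        integral_mono (hint _ (convex_Λ hx hy ha hb hab)) (hxi.add hyi) hpt
    _ = _ := by rw [integral_add hxi hyi, integral_const_mul, integral_const_mul]; rfl

lemma isClosed_setOf_zdual_le (hν : ∀ v, 0 ≤ ν v)
    (hass : ∀ l : L5, Integrable (fun v => ν v * expA m l v) ↔ l.2.2 < 0) (ρ : L5) (c : ℝ) :
    IsClosed {l | l ∈ Λ ∧ zdual m ν l ρ ≤ c} := by
  refine isClosed_of_closure_subset fun l hl => ?_
  obtain ⟨x, hxS, hx⟩ := mem_closure_iff_seq_limit.1 hl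
  have hρ : Continuous fun l : L5 => dot5 l ρ := (dualCLM ρ).continuous
  -- Fatou along `x n → l`: integrability at `l` is what forces the limit to stay in `Λ`
  obtain ⟨hint, hle⟩ := integrable_and_integral_le_of_tendsto
    (F := fun n v => ν v * expA m (x n) v) (f := fun v => ν v * expA m l v)
    (c := fun n => c + dot5 (x n) ρ)
    (fun n => (hass _).2 (hxS n).1)
    (fun n => ae_of_all _ fun v => mul_nonneg (hν v) (expA_pos m _ v).le)
    (ae_of_all _ fun v => ((continuous_const.mul (Real.continuous_exp.comp
      (dualCLM (aVec m v)).continuous)).tendsto l).comp hx)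
    (tendsto_const_nhds.add ((hρ.tendsto l).comp hx))
    (fun n => by have := (hxS n).2; rw [zdual] at this; linarith)
  exact ⟨(hass l).1 hint, by rw [zdual]; linarith⟩

lemma norm_smul_dualCLM_aVec_le (hν : ∀ v, 0 ≤ ν v) (l : L5) (v : V3) :
    ‖(ν v * expA m l v) • dualCLM (aVec m v)‖ ≤ 5 * |m| * (ν v * (1 + nsq v) * expA m l v) := by
  have hνe : 0 ≤ ν v * expA m l v := mul_nonneg (hν v) (expA_pos m l v).le
  rw [norm_smul, Real.norm_eq_abs, abs_of_nonneg hνe]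
  calc _ ≤ ν v * expA m l v * (5 * (|m| * (1 + nsq v))) :=
        mul_le_mul_of_nonneg_left ((norm_dualCLM_le _).trans
          (mul_le_mul_of_nonneg_left (norm_aVec_le m v) (by norm_num))) hνe
    _ = _ := by ring

lemma integrable_smul_dualCLM_aVec (hν : ∀ v, 0 ≤ ν v) {l : L5}
    (hl : Integrable (fun v => ν v * expA m l v))
    (hl' : Integrable (fun v => ν v * (1 + nsq v) * expA m l v)) :
    Integrable (fun v => (ν v * expA m l v) • dualCLM (aVec m v)) :=
  (hl'.const_mul _).mono' (hl.1.smul (continuous_dualCLM.comp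
    (continuous_aVec m)).aestronglyMeasurable) (ae_of_all _ (norm_smul_dualCLM_aVec_le hν l))

lemma dot5_aVec_le_of_dist_lt (hm : 0 ≤ m) {l l' : L5} {ε : ℝ} (h : dist l' l < ε) (v : V3) :
    dot5 l' (aVec m v) ≤ dot5 (l + (5 * ε, 0, 5 * ε)) (aVec m v) := by
  have hdiff := (abs_le.1 (abs_dot5_aVec_le m (l' - l) v)).2
  have hshift : dot5 ((5 * ε, 0, 5 * ε) : L5) (aVec m v) = 5 * ε * m * (1 + nsq v) := by
    simp only [dot5_aVec, dot3, Pi.zero_apply, zero_mul, Finset.sum_const_zero]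
    ring
  rw [dot5_sub_left, abs_of_nonneg hm, ← dist_eq_norm] at hdiff
  rw [dot5_add_left, hshift]
  have : 5 * dist l' l * m * (1 + nsq v) ≤ 5 * ε * m * (1 + nsq v) := by
    gcongr
    linarith [nsq_nonneg v]
  linarith

lemma hasFDerivAt_integral_expA (hm : 0 ≤ m) (hν : ∀ v, 0 ≤ ν v)
    (hint : ∀ l ∈ Λ, Integrable (fun v => ν v * expA m l v))
    (hint' : ∀ l ∈ Λ, Integrable (fun v => ν v * (1 + nsq v) * expA m l v)) {l : L5}
    (hl : l ∈ Λ) :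
    HasFDerivAt (fun l => ∫ v, ν v * expA m l v)
      (∫ v, (ν v * expA m l v) • dualCLM (aVec m v)) l := by
  have hl2 : l.2.2 < 0 := hl
  set ε := -l.2.2 / 10
  have hε : 0 < ε := by simp only [ε]; linarith
  -- on the ball of radius `ε` around `l`, the integrand is dominated by the one at
  -- `l + (5ε, 0, 5ε) ∈ Λ`
  have hdom : l + (5 * ε, 0, 5 * ε) ∈ Λ := show l.2.2 + 5 * ε < 0 by simp only [ε]; linarith
  refine hasFDerivAt_integral_of_dominated_of_fderiv_le
    (F' := fun x v => (ν v * expA m x v) • dualCLM (aVec m v)) (Metric.ball_mem_nhds l hε)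
    ?_ (hint l hl) (integrable_smul_dualCLM_aVec hν (hint l hl) (hint' l hl)).1
    (ae_of_all _ fun v x hx => ?_) ((hint' _ hdom).const_mul (5 * |m|))
    (ae_of_all _ fun v x _ => ?_)
  · filter_upwards [isOpen_Λ.mem_nhds hl] with x hx using (hint x hx).1
  · refine (norm_smul_dualCLM_aVec_le hν x v).trans ?_
    gcongr
    · exact mul_nonneg (hν v) (by linarith [nsq_nonneg v])
    · exact Real.exp_le_exp.2 (dot5_aVec_le_of_dist_lt hm hx v)
  · have := ((dualCLM (aVec m v)).hasFDerivAt (x := x)).exp.const_mul (ν v)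
    rwa [smul_smul] at this

lemma exists_isMinOn_zdual (hm : 0 ≤ m) (hν : ∀ v, 0 ≤ ν v)
    (hass : ∀ l : L5, Integrable (fun v => ν v * expA m l v) ↔ l.2.2 < 0)
    (hint' : ∀ l ∈ Λ, Integrable (fun v => ν v * (1 + nsq v) * expA m l v)) {ρ : L5}
    (hbdd : ∀ c, Bornology.IsBounded {l | l ∈ Λ ∧ zdual m ν l ρ ≤ c}) :
    ∃ l ∈ Λ, IsMinOn (fun l => zdual m ν l ρ) Λ l := by
  set l₀ : L5 := (0, 0, -1)
  have hl₀ : l₀ ∈ Λ := show (-1 : ℝ) < 0 by norm_num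
  set S := {l | l ∈ Λ ∧ zdual m ν l ρ ≤ zdual m ν l₀ ρ}
  have hS : IsCompact S :=
    Metric.isCompact_of_isClosed_isBounded (isClosed_setOf_zdual_le hν hass ρ _) (hbdd _)
  have hcont : ContinuousOn (fun l => zdual m ν l ρ) S := fun l hl =>
    ((hasFDerivAt_integral_expA hm hν (fun l => (hass l).2) hint' hl.1).continuousAt.sub
      (dualCLM ρ).continuous.continuousAt).continuousWithinAt
  obtain ⟨lmin, hlmin, hmin⟩ := hS.exists_isMinOn ⟨l₀, hl₀, le_rfl⟩ hcont
  refine ⟨lmin, hlmin.1, isMinOn_iff.2 fun l hl => ?_⟩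
  by_cases hlS : zdual m ν l ρ ≤ zdual m ν l₀ ρ
  · exact isMinOn_iff.1 hmin l ⟨hl, hlS⟩
  · exact (isMinOn_iff.1 hmin l₀ ⟨hl₀, le_rfl⟩).trans (le_of_not_ge hlS)

lemma momVec_expA_eq_of_isLocalMin (hm : 0 ≤ m) (hν : ∀ v, 0 ≤ ν v)
    (hint : ∀ l ∈ Λ, Integrable (fun v => ν v * expA m l v))
    (hint' : ∀ l ∈ Λ, Integrable (fun v => ν v * (1 + nsq v) * expA m l v)) {ρ l : L5}
    (hl : l ∈ Λ) (hmin : IsLocalMin (fun l => zdual m ν l ρ) l) :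
    momVec m ν (expA m l) = ρ := by
  have hzero := hmin.hasFDerivAt_eq_zero
    ((hasFDerivAt_integral_expA hm hν hint hint' hl).sub (dualCLM ρ).hasFDerivAt)
  refine eq_of_forall_dot5_eq fun δ => ?_
  have := congrArg (fun L => L δ) hzero
  simp only [sub_apply, zero_apply, sub_eq_zero,
    ContinuousLinearMap.integral_apply (integrable_smul_dualCLM_aVec hν (hint l hl) (hint' l hl)),
    smul_apply, dualCLM_apply, smul_eq_mul] at this
  rw [dot5_momVec (hint' l hl), ← this]
  exact integral_congr_ae (ae_of_all _ fun v => by ring)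

end Dual

section Coercivity

variable {m : ℝ} {ν : V3 → ℝ}

lemma zdual_add_smul (l δ ρ : L5) (t : ℝ) :
    zdual m ν (l + t • δ) ρ = (∫ v, ν v * expA m (l + t • δ) v) - dot5 l ρ - t * dot5 δ ρ := by
  rw [zdual, dot5_add_left, dot5_smul_left, sub_add_eq_sub_sub]

lemma exists_exp_mul_le_integral_expA_add_smul (hν : ∀ v, 0 < ν v)
    (hint : ∀ l ∈ Λ, Integrable (fun v => ν v * expA m l v)) {x₀ δ : L5} (hx₀ : x₀ ∈ Λ)
    {v₀ : V3} (hv₀ : 0 < dot5 δ (aVec m v₀)) :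
    ∃ β > 0, ∃ ε > 0, ∀ t, 0 ≤ t → x₀ + t • δ ∈ Λ →
      Real.exp (t * ε) * β ≤ ∫ v, ν v * expA m (x₀ + t • δ) v := by
  set ε := dot5 δ (aVec m v₀) / 2
  set U := {v | ε < dot5 δ (aVec m v)}
  have hU : IsOpen U := isOpen_lt continuous_const (continuous_dot5_aVec m δ)
  have hpos : ∀ v, 0 < ν v * expA m x₀ v := fun v => mul_pos (hν v) (expA_pos m x₀ v)
  have hβ : 0 < ∫ v in U, ν v * expA m x₀ v := by
    have hsupp : Function.support (fun v => ν v * expA m x₀ v) ∩ U = U :=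
      Set.inter_eq_right.2 fun v _ => Function.mem_support.2 (hpos v).ne'
    rw [setIntegral_pos_iff_support_of_nonneg_ae (ae_of_all _ fun v => (hpos v).le)
      (hint x₀ hx₀).integrableOn, hsupp]
    exact hU.measure_pos volume ⟨v₀, half_lt_self hv₀⟩
  refine ⟨_, hβ, ε, half_pos hv₀, fun t ht hΛ => ?_⟩
  calc Real.exp (t * ε) * ∫ v in U, ν v * expA m x₀ v
      = ∫ v in U, Real.exp (t * ε) * (ν v * expA m x₀ v) := (integral_const_mul _ _).symm
    _ ≤ ∫ v in U, ν v * expA m (x₀ + t • δ) v := by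
        refine setIntegral_mono_on ((hint x₀ hx₀).integrableOn.const_mul _)
          (hint _ hΛ).integrableOn hU.measurableSet fun v (hv : ε < _) => ?_
        rw [expA_add, dot5_smul_left, mul_comm, ← mul_assoc]
        exact mul_le_mul_of_nonneg_left (Real.exp_le_exp.2
          (mul_le_mul_of_nonneg_left hv.le ht)) (hpos v).le
    _ ≤ ∫ v, ν v * expA m (x₀ + t • δ) v :=
        setIntegral_le_integral (hint _ hΛ)
          (ae_of_all _ fun v => mul_nonneg (hν v).le (expA_pos m _ v).le)

lemma exists_sub_le_zdual_add_smul (hν : ∀ v, 0 < ν v)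
    (hint : ∀ l ∈ Λ, Integrable (fun v => ν v * expA m l v)) {x₀ δ : L5} (hx₀ : x₀ ∈ Λ)
    {v₀ : V3} (hv₀ : 0 < dot5 δ (aVec m v₀)) (ρ : L5) :
    ∃ C, ∀ t, 0 ≤ t → x₀ + t • δ ∈ Λ → t - C ≤ zdual m ν (x₀ + t • δ) ρ := by
  obtain ⟨β, hβ, ε, hε, hgrowth⟩ :=
    exists_exp_mul_le_integral_expA_add_smul hν hint hx₀ hv₀
  set B := dot5 δ ρ
  -- bound `exp` by its tangent line at `log K`, whose slope `K β ε` exceeds `|B|`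
  set K := (|B| + 1) / (β * ε)
  have hK : 0 < K := by positivity
  have hKβε : K * β * ε = |B| + 1 := by simp only [K]; field_simp
  refine ⟨dot5 x₀ ρ - K * β * (1 - Real.log K), fun t ht hΛ => ?_⟩
  have htan := mul_le_mul_of_nonneg_right (Real.mul_add_one_sub_log_le_exp hK (t * ε)) hβ.le
  have hB : 0 ≤ t * (|B| - B) := mul_nonneg ht (sub_nonneg.2 (le_abs_self B))
  rw [zdual_add_smul]
  nlinarith [hgrowth t ht hΛ]

lemma dot5_momVec_neg (hm : m ≠ 0) (hν : ∀ v, 0 < ν v) {f : V3 → ℝ} (hf0 : ∀ v, 0 ≤ f v)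
    (hfne : ¬ f =ᵐ[volume] (fun _ => (0 : ℝ)))
    (hf : Integrable (fun v => ν v * (1 + nsq v) * f v)) {δ : L5} (hδ : δ ≠ 0)
    (hneg : ∀ v, dot5 δ (aVec m v) ≤ 0) : dot5 δ (momVec m ν f) < 0 := by
  have hnp : ∀ v, ν v * dot5 δ (aVec m v) * f v ≤ 0 := fun v =>
    mul_nonpos_of_nonpos_of_nonneg (mul_nonpos_of_nonneg_of_nonpos (hν v).le (hneg v)) (hf0 v)
  rw [dot5_momVec hf]
  refine (integral_nonpos hnp).lt_of_ne fun h0 => hfne ?_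
  have hae := (integral_eq_zero_iff_of_nonneg (fun v => neg_nonneg.2 (hnp v))
    (integrable_dot5_aVec_mul hf δ).neg).1 (by rw [integral_neg, h0, neg_zero])
  filter_upwards [hae, ae_dot5_aVec_ne_zero hm hδ] with v hv hv'
  simpa [(hν v).ne', hv'] using hv

lemma exists_pos_mul_sub_le_zdual_add_smul (hm : m ≠ 0) (hν : ∀ v, 0 < ν v)
    (hint : ∀ l ∈ Λ, Integrable (fun v => ν v * expA m l v)) {f : V3 → ℝ}
    (hf0 : ∀ v, 0 ≤ f v) (hfne : ¬ f =ᵐ[volume] (fun _ => (0 : ℝ)))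
    (hf : Integrable (fun v => ν v * (1 + nsq v) * f v)) {x₀ δ : L5} (hx₀ : x₀ ∈ Λ)
    (hδ : δ ≠ 0) :
    ∃ κ > 0, ∃ C, ∀ t, 0 ≤ t → x₀ + t • δ ∈ Λ →
      κ * t - C ≤ zdual m ν (x₀ + t • δ) (momVec m ν f) := by
  by_cases h : ∃ v, 0 < dot5 δ (aVec m v)
  · obtain ⟨v₀, hv₀⟩ := h
    obtain ⟨C, hC⟩ := exists_sub_le_zdual_add_smul hν hint hx₀ hv₀ (momVec m ν f)
    exact ⟨1, one_pos, C, fun t ht hΛ => by simpa using hC t ht hΛ⟩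
  · simp only [not_exists, not_lt] at h
    refine ⟨_, neg_pos.2 (dot5_momVec_neg hm hν hf0 hfne hf hδ h), dot5 x₀ (momVec m ν f),
      fun t ht hΛ => ?_⟩
    have : 0 ≤ ∫ v, ν v * expA m (x₀ + t • δ) v :=
      integral_nonneg fun v => mul_nonneg (hν v).le (expA_pos m _ v).le
    rw [zdual_add_smul]
    linarith

lemma isBounded_setOf_zdual_le (hm : m ≠ 0) (hν : ∀ v, 0 < ν v)
    (hass : ∀ l : L5, Integrable (fun v => ν v * expA m l v) ↔ l.2.2 < 0) {f : V3 → ℝ}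
    (hf0 : ∀ v, 0 ≤ f v) (hfne : ¬ f =ᵐ[volume] (fun _ => (0 : ℝ)))
    (hf : Integrable (fun v => ν v * (1 + nsq v) * f v)) (c : ℝ) :
    Bornology.IsBounded {l | l ∈ Λ ∧ zdual m ν l (momVec m ν f) ≤ c} := by
  have hν0 : ∀ v, 0 ≤ ν v := fun v => (hν v).le
  obtain hS | ⟨x₀, hx₀⟩ := Set.eq_empty_or_nonempty {l | l ∈ Λ ∧ zdual m ν l (momVec m ν f) ≤ c}
  · exact hS ▸ Bornology.isBounded_empty
  refine Convex.isBounded_of_forall_exists_add_smul_notMem (isClosed_setOf_zdual_le hν0 hass _ c)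
    ((convexOn_zdual hν0 (fun l => (hass l).2) _).convex_le c) hx₀ fun δ hδ => ?_
  obtain ⟨κ, hκ, C, hC⟩ :=
    exists_pos_mul_sub_le_zdual_add_smul hm hν (fun l => (hass l).2) hf0 hfne hf hx₀.1 hδ
  set t := max 0 ((c + C + 1) / κ)
  refine ⟨t, le_max_left _ _, fun ⟨hΛ, hle⟩ => ?_⟩
  have hκt : c + C + 1 ≤ κ * t := (div_le_iff₀' hκ).1 (le_max_right _ _)
  linarith [hC t (le_max_left _ _) hΛ]

end Coercivity

lemma exists_momVec_expA_eq {m : ℝ} (hm : 0 < m) {ν : V3 → ℝ} (hν : ∀ v, 0 < ν v)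
    (hass : ∀ l : L5, Integrable (fun v => ν v * expA m l v) ↔ l.2.2 < 0)
    (hint' : ∀ l ∈ Λ, Integrable (fun v => ν v * (1 + nsq v) * expA m l v)) {f : V3 → ℝ}
    (hf0 : ∀ v, 0 ≤ f v) (hfne : ¬ f =ᵐ[volume] (fun _ => (0 : ℝ)))
    (hf : Integrable (fun v => ν v * (1 + nsq v) * f v)) :
    ∃ l ∈ Λ, momVec m ν (expA m l) = momVec m ν f := by
  have hν0 : ∀ v, 0 ≤ ν v := fun v => (hν v).le
  obtain ⟨l, hl, hmin⟩ := exists_isMinOn_zdual hm.le hν0 hass hint'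
    (isBounded_setOf_zdual_le hm.ne' hν hass hf0 hfne hf)
  exact ⟨l, hl, momVec_expA_eq_of_isLocalMin hm.le hν0 (fun l => (hass l).2) hint' hl
    (hmin.isLocalMin (isOpen_Λ.mem_nhds hl))⟩

theorem unique_multiplier_and_minimizer_general
    (m : ℝ) (hm : 0 < m)
    (ν : V3 → ℝ) (hνpos : ∀ v, 0 < ν v)
    (hass : ∀ l : L5, Integrable (fun v => ν v * expA m l v) ↔ l.2.2 < 0)
    (hass2 : ∀ l : L5, l.2.2 < 0 →
      Integrable (fun v => ν v * (1 + nsq v) * expA m l v))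
    (f : V3 → ℝ) (hf0 : ∀ v, 0 ≤ f v)
    (hfne : ¬ f =ᵐ[volume] (fun _ => (0 : ℝ)))
    (hfint : Integrable (fun v => ν v * (1 + nsq v) * f v)) :
    (∃! l : L5, l.2.2 < 0 ∧ momentMatch m ν f l) ∧
    (∀ l : L5, l.2.2 < 0 → momentMatch m ν f l →
      (∀ g : V3 → ℝ, memChi m ν f g → Integrable (fun v => ν v * entH (g v)) →
        (∫ v, ν v * entH (expA m l v)) ≤ ∫ v, ν v * entH (g v)) ∧
      (∀ g : V3 → ℝ, memChi m ν f g → Integrable (fun v => ν v * entH (g v)) →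
        (∫ v, ν v * entH (g v)) = (∫ v, ν v * entH (expA m l v)) →
        g =ᵐ[volume] expA m l)) := by
  obtain ⟨l, hl, hM⟩ := exists_momVec_expA_eq hm hνpos hass hass2 hf0 hfne hfint
  refine ⟨⟨l, ⟨hl, momentMatch_iff.2 hM⟩, fun l' ⟨hl', hM'⟩ =>
    eq_of_momVec_expA_eq hm.ne' hνpos (hass2 l' hl') (hass2 l hl)
      ((momentMatch_iff.1 hM').trans hM.symm)⟩, fun l hl hM => ?_⟩
  have hmom : ∀ g, memChi m ν f g → momVec m ν g = momVec m ν (expA m l) := fun g hg =>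
    (momVec_eq_of_memChi hfint hg).trans (momentMatch_iff.1 hM).symm
  exact ⟨fun g hg hgent => integral_entH_expA_le (fun v => (hνpos v).le) hg.1 (hass2 l hl)
      hg.2.1 hgent (hmom g hg),
    fun g hg hgent heq => ae_eq_expA_of_integral_entH_eq hνpos hg.1 (hass2 l hl) hg.2.1 hgent
      (hmom g hg) heq⟩

/-- for every admissible `f` there exists a unique multiplier
`λ ∈ Λ` such that the Maxwellian `M = exp_λ` matches all ν-weighted moments of
`f`; consequently, this `M` is the unique minimizer of `g ↦ ∫ ν h(g)` over χ. -/
theorem unique_multiplier_and_minimizer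
    (m : ℝ) (hm : 0 < m)
    (ν : V3 → ℝ) (hνmeas : Measurable ν) (hνpos : ∀ v, 0 < ν v)
    (hass : ∀ l : L5, Integrable (fun v => ν v * expA m l v) ↔ l.2.2 < 0)
    (hass2 : ∀ l : L5, l.2.2 < 0 →
      Integrable (fun v => ν v * (1 + nsq v) * expA m l v))
    (f : V3 → ℝ) (hfmeas : Measurable f) (hf0 : ∀ v, 0 ≤ f v)
    (hfne : ¬ f =ᵐ[volume] (fun _ => (0 : ℝ)))
    (hfint : Integrable (fun v => ν v * (1 + nsq v) * f v)) :
    (∃! l : L5, l.2.2 < 0 ∧ momentMatch m ν f l) ∧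
    (∀ l : L5, l.2.2 < 0 → momentMatch m ν f l →
      (∀ g : V3 → ℝ, memChi m ν f g → Integrable (fun v => ν v * entH (g v)) →
        (∫ v, ν v * entH (expA m l v)) ≤ ∫ v, ν v * entH (g v)) ∧
      (∀ g : V3 → ℝ, memChi m ν f g → Integrable (fun v => ν v * entH (g v)) →
        (∫ v, ν v * entH (g v)) = (∫ v, ν v * entH (expA m l v)) →
        g =ᵐ[volume] expA m l)) :=
  unique_multiplier_and_minimizer_general m hm ν hνpos hass hass2 f hf0 hfne hfint
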